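/- arXiv:2110.03457 — 5 statements merged into one kernel-verified Lean document; each statement's English description precedes it below -/
import Mathlib

section
/- For the M/G/∞ queue with service distribution G₁(t) = e^{-ρ}/(e^{-ρ} + (1-e^{-ρ})e^{-λt}) for t ≥ 0 (with λ > 0, ρ > 0), the peakedness p = B̄(1/α) equals (ρ+1)/(e^ρ + ρ), where α = ρ/λ. -/
/-!
With `D(v) = a + (1 - a) e^{-λv}` and `a = e^{-ρ}`, the integrand `1 - G₁ = 1 - a / D` is the
derivative of `-log D / λ`, and `D 0 = 1`. Hence `exp (-λ ∫₀ᵗ (1 - G₁)) = D t`, so the Laplace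
transform at `s = 1/α = λ/ρ` is `a / s + (1 - a) / (s + λ)`, and the rest is algebra.
-/

open Real MeasureTheory Set

theorem integral_exp_neg_mul_Ioi_zero {s : ℝ} (hs : 0 < s) :
    ∫ t in Ioi (0 : ℝ), exp (-s * t) = s⁻¹ := by
  rw [integral_exp_mul_Ioi (neg_lt_zero.2 hs), mul_zero, exp_zero, neg_div, div_neg, neg_neg,
    one_div]

theorem integrableOn_exp_neg_mul_Ioi_zero {s : ℝ} (hs : 0 < s) :
    IntegrableOn (fun t ↦ exp (-s * t)) (Ioi 0) :=
  integrableOn_exp_mul_Ioi (neg_lt_zero.2 hs) 0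

section Logistic

variable {a lam : ℝ}

theorem logistic_denom_pos (ha₀ : 0 ≤ a) (ha₁ : a ≤ 1) (v : ℝ) :
    0 < a + (1 - a) * exp (-(lam * v)) := by
  rcases ha₀.lt_or_eq with ha | rfl
  · have := exp_pos (-(lam * v))
    nlinarith
  · simpa using exp_pos _

theorem hasDerivAt_log_logistic_denom (ha₀ : 0 ≤ a) (ha₁ : a ≤ 1) (hlam : lam ≠ 0) (v : ℝ) :
    HasDerivAt (fun v ↦ -log (a + (1 - a) * exp (-(lam * v))) / lam)
      (1 - a / (a + (1 - a) * exp (-(lam * v)))) v := by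
  have hD := logistic_denom_pos (lam := lam) ha₀ ha₁ v
  have hlin : HasDerivAt (fun v : ℝ ↦ -(lam * v)) (-lam) v := by
    simpa using ((hasDerivAt_id v).const_mul lam).fun_neg
  refine ((((hlin.exp.const_mul (1 - a)).const_add a).log hD.ne').fun_neg.div_const lam
    ).congr_deriv ?_
  field_simp
  ring

theorem integral_one_sub_logistic (ha₀ : 0 ≤ a) (ha₁ : a ≤ 1) (hlam : lam ≠ 0) (t : ℝ) :
    ∫ v in (0 : ℝ)..t, (1 - a / (a + (1 - a) * exp (-(lam * v)))) =
      -log (a + (1 - a) * exp (-(lam * t))) / lam := by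
  have hcont : Continuous fun v ↦ 1 - a / (a + (1 - a) * exp (-(lam * v))) :=
    continuous_const.sub <| continuous_const.div (by fun_prop)
      fun v ↦ (logistic_denom_pos ha₀ ha₁ v).ne'
  rw [intervalIntegral.integral_eq_sub_of_hasDerivAt
    (fun v _ ↦ hasDerivAt_log_logistic_denom ha₀ ha₁ hlam v) (hcont.intervalIntegrable 0 t)]
  simp

end Logistic

theorem exp_neg_mul_mul_logistic_denom (a s lam t : ℝ) :
    exp (-s * t) * (a + (1 - a) * exp (-(lam * t))) =
      a * exp (-s * t) + (1 - a) * exp (-(s + lam) * t) := by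
  rw [mul_add, mul_left_comm, ← exp_add]
  ring_nf

theorem integral_exp_neg_mul_sub_integral_one_sub_logistic {a lam s : ℝ} (ha₀ : 0 ≤ a)
    (ha₁ : a ≤ 1) (hlam : 0 < lam) (hs : 0 < s) :
    ∫ t in Ioi (0 : ℝ), exp (-s * t - lam * ∫ v in (0 : ℝ)..t,
        (1 - a / (a + (1 - a) * exp (-(lam * v))))) =
      a / s + (1 - a) / (s + lam) := by
  have hslam : 0 < s + lam := by linarith
  have hpoint : ∀ t, exp (-s * t - lam * ∫ v in (0 : ℝ)..t,
      (1 - a / (a + (1 - a) * exp (-(lam * v))))) =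
        a * exp (-s * t) + (1 - a) * exp (-(s + lam) * t) := fun t ↦ by
    rw [integral_one_sub_logistic ha₀ ha₁ hlam.ne', mul_div_cancel₀ _ hlam.ne', sub_neg_eq_add,
      exp_add, exp_log (logistic_denom_pos ha₀ ha₁ t), exp_neg_mul_mul_logistic_denom]
  simp_rw [hpoint]
  rw [integral_add ((integrableOn_exp_neg_mul_Ioi_zero hs).const_mul a)
      ((integrableOn_exp_neg_mul_Ioi_zero hslam).const_mul (1 - a)),
    integral_const_mul, integral_const_mul, integral_exp_neg_mul_Ioi_zero hs,
    integral_exp_neg_mul_Ioi_zero hslam, div_eq_mul_inv, div_eq_mul_inv]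

/-- For the M/G/∞ queue with service distribution
`G₁(t) = e^{-ρ}/(e^{-ρ} + (1-e^{-ρ})e^{-λt})`, the peakedness `p = B̄(1/α)`
equals `(ρ+1)/(e^ρ + ρ)`, where `α = ρ/λ`. -/
theorem stmt_0 (lam ρ α : ℝ) (hlam : 0 < lam) (hρ : 0 < ρ) (hα : α = ρ / lam) :
    1 + 1 / ρ -
      1 / (lam * ∫ t in Ioi (0:ℝ), Real.exp (-(t / α) -
        lam * ∫ v in (0:ℝ)..t,
          (1 - Real.exp (-ρ) / (Real.exp (-ρ) + (1 - Real.exp (-ρ)) * Real.exp (-(lam * v)))))) =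
    (ρ + 1) / (Real.exp ρ + ρ) := by
  have hneg : ∀ t, -(t / α) = -α⁻¹ * t := fun t ↦ by rw [div_eq_inv_mul, neg_mul]
  simp_rw [hneg]
  rw [integral_exp_neg_mul_sub_integral_one_sub_logistic (exp_pos _).le
    (exp_le_one_iff.2 (neg_nonpos.2 hρ.le)) hlam (by rw [hα]; positivity), hα]
  have hlaplace : lam * (exp (-ρ) / (ρ / lam)⁻¹ + (1 - exp (-ρ)) / ((ρ / lam)⁻¹ + lam)) =
      ρ * (ρ * exp (-ρ) + 1) / (ρ + 1) := by
    field_simp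
    ring
  rw [hlaplace, exp_neg]
  field_simp
  ring
end

section
/- For the M/D/∞ queue with deterministic service time α (i.e., G(t) = 0 for t < α and G(t) = 1 for t ≥ α), the peakedness p = B̄(1/α) equals (ρ+1)/(e^{ρ+1} + ρ), where ρ = λα. -/
/-!
For deterministic service `∫₀ᵗ (1 - G) = min t α`, so the Laplace integral splits at `α` into
`∫₀^α e^{-(1+ρ)t/α} dt = α(1 - e^{-(1+ρ)})/(1+ρ)` and `e^{-ρ} ∫_α^∞ e^{-t/α} dt = α e^{-(1+ρ)}`.
Hence `λ ∫ = ρ (e^{ρ+1} + ρ) / ((1+ρ) e^{ρ+1})`, and the peakedness formula is algebra.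
-/

open Real MeasureTheory Set

theorem intervalIntegral_one_sub_ite_lt {α t : ℝ} (hα : 0 ≤ α) (ht : 0 ≤ t) :
    ∫ v in (0:ℝ)..t, (1 - if v < α then (0:ℝ) else 1) = min t α := by
  have hae : (fun v : ℝ => 1 - if v < α then (0:ℝ) else 1) =ᵐ[volume] (Iic α).indicator 1 := by
    refine .trans (.of_forall fun v => ?_) (indicator_ae_eq_of_ae_eq_set Iio_ae_eq_Iic)
    by_cases h : v < α <;> simp [h]
  rw [intervalIntegral.integral_of_le ht, integral_congr_ae (ae_restrict_of_ae hae),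
    integral_indicator_one measurableSet_Iic, measureReal_restrict_apply measurableSet_Iic,
    inter_comm, Ioc_inter_Iic, volume_real_Ioc_of_le (le_min ht hα), sub_zero]

theorem intervalIntegral_exp_mul {c : ℝ} (hc : c ≠ 0) (a b : ℝ) :
    ∫ x in a..b, exp (c * x) = (exp (c * b) - exp (c * a)) / c := by
  rw [intervalIntegral.integral_comp_mul_left exp hc, integral_exp, smul_eq_mul, inv_mul_eq_div]

theorem integral_Ioi_exp_neg_div_sub_mul_min {lam α : ℝ} (hlam : 0 ≤ lam) (hα : 0 < α) :
    ∫ t in Ioi (0:ℝ), exp (-(t / α) - lam * min t α) =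
      α * ((1 - exp (-(1 + lam * α))) / (1 + lam * α) + exp (-(1 + lam * α))) := by
  have h1ρ : 0 < 1 + lam * α := by positivity
  set c := -(1 + lam * α) / α with hc
  have hc0 : c ≠ 0 := div_ne_zero (neg_ne_zero.2 h1ρ.ne') hα.ne'
  have hα' : -α⁻¹ < 0 := neg_neg_of_pos (inv_pos.2 hα)
  have h_Ioc : EqOn (fun t => exp (-(t / α) - lam * min t α)) (fun t => exp (c * t))
      (Ioc 0 α) := by
    intro t ht
    simp only [min_eq_left ht.2, hc]
    congr 1
    field_simp
    ring
  have h_Ioi : EqOn (fun t => exp (-(t / α) - lam * min t α))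
      (fun t => exp (-(lam * α)) * exp (-α⁻¹ * t)) (Ioi α) := by
    intro t (ht : α < t)
    simp only [min_eq_right ht.le, ← exp_add]
    congr 1
    field_simp
    ring
  have hcont : Continuous fun t => exp (-(t / α) - lam * min t α) := by fun_prop
  rw [← Ioc_union_Ioi_eq_Ioi hα.le, setIntegral_union (Ioc_disjoint_Ioi le_rfl) measurableSet_Ioi
      hcont.integrableOn_Ioc (IntegrableOn.congr_fun
        ((integrableOn_exp_mul_Ioi hα' α).const_mul _) h_Ioi.symm measurableSet_Ioi),
    setIntegral_congr_fun measurableSet_Ioc h_Ioc, setIntegral_congr_fun measurableSet_Ioi h_Ioi,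
    ← intervalIntegral.integral_of_le hα.le, intervalIntegral_exp_mul hc0, integral_const_mul,
    integral_exp_mul_Ioi hα']
  have hcα : c * α = -(1 + lam * α) := by rw [hc]; field_simp
  have hE : exp (-(lam * α)) * exp (-1) = exp (-(1 + lam * α)) := by
    rw [← exp_add]; ring_nf
  rw [hcα, mul_zero, exp_zero, hc]
  field_simp
  linear_combination (1 + lam * α) * hE

/-- For the M/D/∞ queue with deterministic service time `α`, the peakedness
`p = B̄(1/α)` equals `(ρ+1)/(e^{ρ+1} + ρ)`, where `ρ = λα`. -/
theorem stmt_1 (lam α ρ : ℝ) (hlam : 0 < lam) (hα : 0 < α) (hρ : ρ = lam * α) :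
    1 + 1 / ρ -
      1 / (lam * ∫ t in Ioi (0:ℝ), Real.exp (-(t / α) -
        lam * ∫ v in (0:ℝ)..t, (1 - if v < α then (0:ℝ) else 1))) =
    (ρ + 1) / (Real.exp (ρ + 1) + ρ) := by
  have hρ0 : 0 < ρ := hρ ▸ mul_pos hlam hα
  have hinner : EqOn
      (fun t => exp (-(t / α) - lam * ∫ v in (0:ℝ)..t, (1 - if v < α then (0:ℝ) else 1)))
      (fun t => exp (-(t / α) - lam * min t α)) (Ioi 0) := fun t (ht : 0 < t) => by
    simp only [intervalIntegral_one_sub_ite_lt hα.le ht.le]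
  rw [setIntegral_congr_fun measurableSet_Ioi hinner,
    integral_Ioi_exp_neg_div_sub_mul_min hlam.le hα, ← mul_assoc, ← hρ,
    show exp (-(1 + ρ)) = (exp (ρ + 1))⁻¹ by rw [← exp_neg, add_comm]]
  have hE : 0 < exp (ρ + 1) := exp_pos _
  generalize exp (ρ + 1) = E at hE ⊢
  have hlamI : ρ * ((1 - E⁻¹) / (1 + ρ) + E⁻¹) = ρ * (E + ρ) / ((1 + ρ) * E) := by
    field_simp
    ring
  rw [hlamI]
  field_simp
  ring
end

section
/- For the M/M/∞ queue with exponential service times G(t) = 1 − e^{−t/α}, t ≥ 0, the peakedness p = B̄(1/α) equals (e^ρ − ρ − 1)/(ρ(e^ρ − 1)), where ρ = λα. -/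
open Real MeasureTheory Set Filter Topology

/-!
For exponential service the exponent of the Laplace integrand at `s = 1/α` is
`-t/α - ρ (1 - e^{-t/α})`, and `e^{-t/α}` is, up to the factor `-ρ/α`, the derivative of
`-ρ (1 - e^{-t/α})`. So the integrand is an exact derivative, of
`-(α/ρ) exp(-ρ (1 - e^{-t/α}))`, and the integral over `(0, ∞)` is `(α/ρ)(1 - e^{-ρ})`; as the integrand is
positive, integrability comes for free from the limit of the antiderivative.
Since `λ α = ρ`, the peakedness becomes `1 + 1/ρ - 1/(1 - e^{-ρ})`, which is the claimed value.
-/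

theorem integral_exp_neg_div {α : ℝ} (hα : α ≠ 0) (t : ℝ) :
    ∫ v in (0:ℝ)..t, exp (-(v / α)) = α * (1 - exp (-(t / α))) := by
  rw [intervalIntegral.integral_comp_div (fun x => exp (-x)) hα, intervalIntegral.integral_comp_neg,
    integral_exp, smul_eq_mul]
  simp

theorem hasDerivAt_exp_neg_mul_one_sub_exp_neg_div {α ρ : ℝ} (hα : α ≠ 0) (hρ : ρ ≠ 0) (t : ℝ) :
    HasDerivAt (fun t => -(α / ρ) * exp (-(ρ * (1 - exp (-(t / α))))))
      (exp (-(t / α) - ρ * (1 - exp (-(t / α))))) t := by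
  have hdiv : HasDerivAt (fun t : ℝ => -(t / α)) (-(1 / α)) t :=
    ((hasDerivAt_id' t).div_const α).neg
  have hexponent : HasDerivAt (fun t => -(ρ * (1 - exp (-(t / α)))))
      (-(ρ * (0 - exp (-(t / α)) * -(1 / α)))) t :=
    (((hasDerivAt_const t 1).sub hdiv.exp).const_mul ρ).neg
  refine (hexponent.exp.const_mul (-(α / ρ))).congr_deriv ?_
  rw [exp_sub, exp_neg]
  field_simp
  ring

theorem integral_Ioi_exp_neg_div_sub_mul_one_sub_exp_neg_div {α ρ : ℝ} (hα : 0 < α) (hρ : ρ ≠ 0) :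
    ∫ t in Ioi (0:ℝ), exp (-(t / α) - ρ * (1 - exp (-(t / α)))) = α / ρ * (1 - exp (-ρ)) := by
  have hlim : Tendsto (fun t => -(α / ρ) * exp (-(ρ * (1 - exp (-(t / α))))))
      atTop (𝓝 (-(α / ρ) * exp (-(ρ * (1 - 0))))) := by
    have hdecay : Tendsto (fun t => exp (-(t / α))) atTop (𝓝 0) :=
      tendsto_exp_neg_atTop_nhds_zero.comp (tendsto_id.atTop_div_const hα)
    exact (((tendsto_const_nhds.sub hdecay).const_mul ρ).neg.rexp).const_mul _
  rw [integral_Ioi_of_hasDerivAt_of_nonneg'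
    (fun t _ => hasDerivAt_exp_neg_mul_one_sub_exp_neg_div hα.ne' hρ t)
    (fun t _ => (exp_pos _).le) hlim]
  simp only [sub_zero, mul_one, neg_mul, zero_div, neg_zero, exp_zero, sub_self, mul_zero,
    sub_neg_eq_add]
  ring

theorem one_add_inv_sub_inv_one_sub_exp_neg {ρ : ℝ} (hρ : ρ ≠ 0) :
    1 + 1 / ρ - 1 / (1 - exp (-ρ)) = (exp ρ - ρ - 1) / (ρ * (exp ρ - 1)) := by
  have hexp : exp ρ - 1 ≠ 0 := sub_ne_zero.2 (by simpa using hρ)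
  rw [exp_neg]
  field_simp
  ring

/-- For the M/M/∞ queue with exponential service times `G(t) = 1 - e^{-t/α}`,
the peakedness `p = B̄(1/α)` equals `(e^ρ - ρ - 1)/(ρ(e^ρ - 1))`, `ρ = λα`. -/
theorem stmt_2 (lam α ρ : ℝ) (hlam : 0 < lam) (hα : 0 < α) (hρ : ρ = lam * α) :
    1 + 1 / ρ -
      1 / (lam * ∫ t in Ioi (0:ℝ), Real.exp (-(t / α) -
        lam * ∫ v in (0:ℝ)..t, (1 - (1 - Real.exp (-(v / α)))))) =
    (Real.exp ρ - ρ - 1) / (ρ * (Real.exp ρ - 1)) := by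
  have hρ0 : ρ ≠ 0 := by rw [hρ]; positivity
  have hinner (t : ℝ) :
      lam * ∫ v in (0:ℝ)..t, (1 - (1 - exp (-(v / α)))) = ρ * (1 - exp (-(t / α))) := by
    simp_rw [sub_sub_cancel, integral_exp_neg_div hα.ne', hρ, mul_assoc]
  simp_rw [hinner, integral_Ioi_exp_neg_div_sub_mul_one_sub_exp_neg_div hα hρ0]
  rw [← mul_assoc, mul_div, ← hρ, div_self hρ0, one_mul, one_add_inv_sub_inv_one_sub_exp_neg hρ0]
end

section
/- If the service time distribution G with mean α is NWUE, i.e., ∫_t^∞ (1 − G(v)) dv ≥ α e^{−t/α} for all t ≥ 0, then the peakedness satisfies p ≥ (e^ρ − ρ − 1)/(ρ(e^ρ − 1)). -/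
/-!
NWUE says that the tail integral `∫_t^∞ (1 - G)` dominates that of the exponential law with the
same mean, i.e. `∫_0^t (1 - G) ≤ α (1 - e^{-t/α})`. Hence the integrand
`exp (-t/α - λ ∫_0^t (1 - G))` dominates `exp (-t/α + ρ (e^{-t/α} - 1))`, whose integral over
`(0, ∞)` is `α (1 - e^{-ρ}) / ρ` in closed form. This gives `λ ∫ ≥ 1 - e^{-ρ}`, which is exactly
the claimed bound on `p`, with equality for exponential service times.
-/

open Real MeasureTheory Set Filter Topology

theorem intervalIntegral_le_of_integral_Ioi_ge {f : ℝ → ℝ} {α t : ℝ}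
    (hf : IntegrableOn f (Ioi 0)) (hmean : ∫ v in Ioi 0, f v = α)
    (htail : α * exp (-(t / α)) ≤ ∫ v in Ioi t, f v) (ht : 0 ≤ t) :
    ∫ v in 0..t, f v ≤ α * (1 - exp (-(t / α))) := by
  rw [← intervalIntegral.integral_Ioi_sub_Ioi hf ht, hmean]
  linarith

section ExponentialLowerKernel

variable {α ρ : ℝ}

theorem hasDerivAt_exp_mul_exp_neg_div_sub_one (t : ℝ) :
    HasDerivAt (fun t => exp (ρ * (exp (-(t / α)) - 1)))
      (-(ρ / α) * exp (-(t / α) + ρ * (exp (-(t / α)) - 1))) t := by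
  have hinner : HasDerivAt (fun t => -(t / α)) (-(1 / α)) t :=
    ((hasDerivAt_id t).div_const α).neg
  convert ((hinner.exp.sub_const 1).const_mul ρ).exp using 1
  rw [exp_add]
  ring

theorem tendsto_exp_mul_exp_neg_div_sub_one (hα : 0 < α) :
    Tendsto (fun t => exp (ρ * (exp (-(t / α)) - 1))) atTop (𝓝 (exp (-ρ))) := by
  have hdecay : Tendsto (fun t => exp (-(t / α))) atTop (𝓝 0) :=
    tendsto_exp_atBot.comp (tendsto_neg_atTop_atBot.comp (tendsto_id.atTop_div_const hα))
  have hlim := ((hdecay.sub_const 1).const_mul ρ).rexp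
  rwa [zero_sub, mul_neg_one] at hlim

variable (hα : 0 < α) (hρ : ρ ≠ 0)
include hα hρ

theorem hasDerivAt_antideriv_exp_neg_div_add_mul_exp_neg_div_sub_one (t : ℝ) :
    HasDerivAt (fun t => -(α / ρ) * exp (ρ * (exp (-(t / α)) - 1)))
      (exp (-(t / α) + ρ * (exp (-(t / α)) - 1))) t := by
  refine ((hasDerivAt_exp_mul_exp_neg_div_sub_one t).const_mul (-(α / ρ))).congr_deriv ?_
  field_simp [hα.ne']

theorem integrableOn_exp_neg_div_add_mul_exp_neg_div_sub_one :
    IntegrableOn (fun t => exp (-(t / α) + ρ * (exp (-(t / α)) - 1))) (Ioi 0) :=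
  integrableOn_Ioi_deriv_of_nonneg'
    (fun t _ => hasDerivAt_antideriv_exp_neg_div_add_mul_exp_neg_div_sub_one hα hρ t)
    (fun _ _ => (exp_pos _).le) ((tendsto_exp_mul_exp_neg_div_sub_one hα).const_mul _)

theorem integral_exp_neg_div_add_mul_exp_neg_div_sub_one :
    ∫ t in Ioi 0, exp (-(t / α) + ρ * (exp (-(t / α)) - 1)) = α / ρ * (1 - exp (-ρ)) := by
  rw [integral_Ioi_of_hasDerivAt_of_nonneg'
    (fun t _ => hasDerivAt_antideriv_exp_neg_div_add_mul_exp_neg_div_sub_one hα hρ t)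
    (fun _ _ => (exp_pos _).le) ((tendsto_exp_mul_exp_neg_div_sub_one hα).const_mul _)]
  simp only [neg_zero, zero_div, exp_zero, sub_self, mul_zero]
  ring

end ExponentialLowerKernel

theorem integrableOn_exp_neg_div_sub_mul {α lam : ℝ} {P : ℝ → ℝ} (hα : 0 < α) (hlam : 0 ≤ lam)
    (hP : Continuous P) (hPnn : ∀ t ∈ Ioi 0, 0 ≤ P t) :
    IntegrableOn (fun t => exp (-(t / α) - lam * P t)) (Ioi 0) := by
  refine (exp_neg_integrableOn_Ioi 0 (inv_pos.2 hα)).mono'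
    (by fun_prop : Continuous fun t => exp (-(t / α) - lam * P t)).aestronglyMeasurable ?_
  filter_upwards [ae_restrict_mem measurableSet_Ioi] with t ht
  rw [norm_of_nonneg (exp_pos _).le, neg_mul, ← div_eq_inv_mul]
  exact exp_le_exp.2 (sub_le_self _ (mul_nonneg hlam (hPnn t ht)))

theorem one_sub_exp_neg_le_mul_integral {α lam : ℝ} {P : ℝ → ℝ} (hα : 0 < α) (hlam : 0 < lam)
    (hP : Continuous P) (hPnn : ∀ t ∈ Ioi 0, 0 ≤ P t)
    (hPle : ∀ t ∈ Ioi 0, P t ≤ α * (1 - exp (-(t / α)))) :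
    1 - exp (-(lam * α)) ≤ lam * ∫ t in Ioi 0, exp (-(t / α) - lam * P t) := by
  have hρ : lam * α ≠ 0 := (mul_pos hlam hα).ne'
  have hcompare : ∀ t ∈ Ioi (0 : ℝ), exp (-(t / α) + lam * α * (exp (-(t / α)) - 1)) ≤
      exp (-(t / α) - lam * P t) := fun t ht => by
    have := mul_le_mul_of_nonneg_left (hPle t ht) hlam.le
    gcongr
    linarith
  calc 1 - exp (-(lam * α))
      = lam * ∫ t in Ioi 0, exp (-(t / α) + lam * α * (exp (-(t / α)) - 1)) := by
        rw [integral_exp_neg_div_add_mul_exp_neg_div_sub_one hα hρ]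
        field_simp
    _ ≤ lam * ∫ t in Ioi 0, exp (-(t / α) - lam * P t) :=
        mul_le_mul_of_nonneg_left (setIntegral_mono_on
          (integrableOn_exp_neg_div_add_mul_exp_neg_div_sub_one hα hρ)
          (integrableOn_exp_neg_div_sub_mul hα hlam.le hP hPnn) measurableSet_Ioi hcompare)
          hlam.le

theorem one_add_one_div_sub_one_div_one_sub_exp_neg {ρ : ℝ} (hρ : 0 < ρ) :
    1 + 1 / ρ - 1 / (1 - exp (-ρ)) = (exp ρ - ρ - 1) / (ρ * (exp ρ - 1)) := by
  have hexp : exp ρ - 1 ≠ 0 := (sub_pos.2 (one_lt_exp_iff.2 hρ)).ne'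
  rw [exp_neg]
  field_simp
  ring

theorem stmt_5_general (lam α ρ : ℝ) (G : ℝ → ℝ)
    (hlam : 0 < lam) (hα : 0 < α) (hρ : ρ = lam * α)
    (hGmono : Monotone G) (hG1 : ∀ t, G t ≤ 1)
    (hGint : IntegrableOn (fun v => 1 - G v) (Ioi 0))
    (hGmean : (∫ v in Ioi (0:ℝ), (1 - G v)) = α)
    (hNWUE : ∀ t ≥ (0:ℝ), α * Real.exp (-(t / α)) ≤ ∫ v in Ioi t, (1 - G v)) :
    (Real.exp ρ - ρ - 1) / (ρ * (Real.exp ρ - 1)) ≤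
    1 + 1 / ρ -
        1 / (lam * ∫ t in Ioi (0:ℝ),
          Real.exp (-(t / α) - lam * ∫ v in (0:ℝ)..t, (1 - G v))) := by
  have hρpos : 0 < ρ := hρ ▸ mul_pos hlam hα
  have hPcont : Continuous fun t => ∫ v in (0:ℝ)..t, (1 - G v) :=
    intervalIntegral.continuous_primitive (fun _ _ => (show Antitone fun v => 1 - G v from
      fun _ _ hab => sub_le_sub_left (hGmono hab) 1).intervalIntegrable) 0
  have hbound := one_sub_exp_neg_le_mul_integral hα hlam hPcont
    (fun t ht => intervalIntegral.integral_nonneg ht.out.le fun v _ => sub_nonneg.2 (hG1 v))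
    (fun t ht => intervalIntegral_le_of_integral_Ioi_ge hGint hGmean (hNWUE t ht.out.le) ht.out.le)
  rw [← hρ] at hbound
  rw [← one_add_one_div_sub_one_div_one_sub_exp_neg hρpos]
  have : 0 < 1 - exp (-ρ) := sub_pos.2 (exp_lt_one_iff.2 (neg_lt_zero.2 hρpos))
  gcongr

/-- If the service time distribution `G` with mean `α` is NWUE, i.e.
`∫_t^∞ (1 - G(v)) dv ≥ α e^{-t/α}` for all `t ≥ 0`, then the peakedness
satisfies `p ≥ (e^ρ - ρ - 1)/(ρ(e^ρ - 1))`. -/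
theorem stmt_5 (lam α ρ : ℝ) (G : ℝ → ℝ)
    (hlam : 0 < lam) (hα : 0 < α) (hρ : ρ = lam * α)
    (hGmono : Monotone G) (hG0 : ∀ t, 0 ≤ G t) (hG1 : ∀ t, G t ≤ 1)
    (hGint : IntegrableOn (fun v => 1 - G v) (Ioi 0))
    (hGmean : (∫ v in Ioi (0:ℝ), (1 - G v)) = α)
    (hNWUE : ∀ t ≥ (0:ℝ), α * Real.exp (-(t / α)) ≤ ∫ v in Ioi t, (1 - G v)) :
    (Real.exp ρ - ρ - 1) / (ρ * (Real.exp ρ - 1)) ≤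
    1 + 1 / ρ -
        1 / (lam * ∫ t in Ioi (0:ℝ),
          Real.exp (-(t / α) - lam * ∫ v in (0:ℝ)..t, (1 - G v))) :=
  stmt_5_general lam α ρ G hlam hα hρ hGmono hG1 hGint hGmean hNWUE
end

section
/- For ρ > 0, define η^{G₁} = p^{G₁}·ρ/(e^ρ − ρ − 1) + 1 with p^{G₁} = (ρ+1)/(e^ρ + ρ), and η^{G₂} = p^{G₂}·ρ/(e^ρ − ρ − 1) + 1 with p^{G₂} = ρ/(e^ρ + ρ − 1). Then both η^{G₁} and η^{G₂} lie in the interval [1, (e^ρ − 1)/(e^ρ − ρ − 1)], and both tend to 1 as ρ → ∞. -/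
open Real Filter

lemma aux_D_pos {ρ : ℝ} (hρ : 0 < ρ) : 0 < Real.exp ρ - ρ - 1 := by
  have := Real.add_one_lt_exp (ne_of_gt hρ)
  linarith

lemma aux_D_quad {ρ : ℝ} (hρ : 0 < ρ) : ρ^2/4 ≤ Real.exp ρ - ρ - 1 := by
  have h := Real.add_one_le_exp (ρ/2)
  have hx : Real.exp ρ = Real.exp (ρ/2) * Real.exp (ρ/2) := by
    rw [← Real.exp_add]; ring_nf
  nlinarith [Real.exp_pos (ρ/2)]

lemma aux_bound {ρ : ℝ} (hρ : 0 < ρ) {p : ℝ} (hp0 : 0 ≤ p) (hp1 : p ≤ 1) :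
    p * ρ / (Real.exp ρ - ρ - 1) ≤ 4 / ρ := by
  have hD := aux_D_pos hρ
  have hq := aux_D_quad hρ
  have h1 : p * ρ ≤ ρ := by nlinarith
  have h2 : ρ / (Real.exp ρ - ρ - 1) ≤ 4 / ρ := by
    rw [div_le_div_iff₀ hD hρ]; nlinarith
  calc p * ρ / (Real.exp ρ - ρ - 1) ≤ ρ / (Real.exp ρ - ρ - 1) := by gcongr
    _ ≤ 4 / ρ := h2

/-- For `ρ > 0`, `η^{G₁} = p^{G₁}·ρ/(e^ρ-ρ-1) + 1` with `p^{G₁} = (ρ+1)/(e^ρ+ρ)`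
and `η^{G₂} = p^{G₂}·ρ/(e^ρ-ρ-1) + 1` with `p^{G₂} = ρ/(e^ρ+ρ-1)` both lie in
`[1, (e^ρ-1)/(e^ρ-ρ-1)]` and tend to `1` as `ρ → ∞`. -/
theorem stmt_19 :
    (∀ ρ > (0:ℝ),
      1 ≤ (ρ + 1) / (Real.exp ρ + ρ) * ρ / (Real.exp ρ - ρ - 1) + 1 ∧
      (ρ + 1) / (Real.exp ρ + ρ) * ρ / (Real.exp ρ - ρ - 1) + 1 ≤
        (Real.exp ρ - 1) / (Real.exp ρ - ρ - 1) ∧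
      1 ≤ ρ / (Real.exp ρ + ρ - 1) * ρ / (Real.exp ρ - ρ - 1) + 1 ∧
      ρ / (Real.exp ρ + ρ - 1) * ρ / (Real.exp ρ - ρ - 1) + 1 ≤
        (Real.exp ρ - 1) / (Real.exp ρ - ρ - 1)) ∧
    Tendsto (fun ρ : ℝ =>
        (ρ + 1) / (Real.exp ρ + ρ) * ρ / (Real.exp ρ - ρ - 1) + 1)
      atTop (nhds 1) ∧
    Tendsto (fun ρ : ℝ =>
        ρ / (Real.exp ρ + ρ - 1) * ρ / (Real.exp ρ - ρ - 1) + 1)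
      atTop (nhds 1) := by
  have key : ∀ ρ > (0:ℝ), (1:ℝ) ≤ Real.exp ρ := fun ρ hρ => Real.one_le_exp hρ.le
  constructor
  · intro ρ hρ
    have hD := aux_D_pos hρ
    have hE : (1:ℝ) ≤ Real.exp ρ := key ρ hρ
    have hE1 : (0:ℝ) < Real.exp ρ + ρ := by linarith
    have hE2 : (0:ℝ) < Real.exp ρ + ρ - 1 := by linarith
    have heq : ρ / (Real.exp ρ - ρ - 1) + 1 = (Real.exp ρ - 1) / (Real.exp ρ - ρ - 1) := by
      field_simp; ring
    have h1 : (0:ℝ) ≤ (ρ + 1) / (Real.exp ρ + ρ) * ρ / (Real.exp ρ - ρ - 1) := by positivity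
    have h2 : (0:ℝ) ≤ ρ / (Real.exp ρ + ρ - 1) * ρ / (Real.exp ρ - ρ - 1) := by positivity
    have hu1 : (ρ + 1) / (Real.exp ρ + ρ) * ρ / (Real.exp ρ - ρ - 1) ≤
        ρ / (Real.exp ρ - ρ - 1) := by
      gcongr
      have : (ρ + 1) / (Real.exp ρ + ρ) ≤ 1 := (div_le_one hE1).2 (by linarith)
      nlinarith [div_nonneg (by linarith : (0:ℝ) ≤ ρ + 1) hE1.le]
    have hu2 : ρ / (Real.exp ρ + ρ - 1) * ρ / (Real.exp ρ - ρ - 1) ≤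
        ρ / (Real.exp ρ - ρ - 1) := by
      gcongr
      have : ρ / (Real.exp ρ + ρ - 1) ≤ 1 := (div_le_one hE2).2 (by linarith)
      nlinarith [div_nonneg hρ.le hE2.le]
    exact ⟨by linarith, by linarith, by linarith, by linarith⟩
  · have hlim : Tendsto (fun ρ : ℝ => (4:ℝ) / ρ) atTop (nhds 0) :=
      tendsto_const_nhds.div_atTop tendsto_id
    have tz : ∀ f : ℝ → ℝ, (∀ᶠ ρ in atTop, 0 ≤ f ρ) → (∀ᶠ ρ in atTop, f ρ ≤ 4 / ρ) →
        Tendsto (fun ρ => f ρ + 1) atTop (nhds 1) := by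
      intro f h0 h1
      have := squeeze_zero' h0 h1 hlim
      simpa using this.add (tendsto_const_nhds (x := (1:ℝ)))
    constructor
    · apply tz
      · filter_upwards [eventually_gt_atTop (0:ℝ)] with ρ hρ
        have hD := aux_D_pos hρ
        have hE1 : (0:ℝ) < Real.exp ρ + ρ := by have := key ρ hρ; linarith
        positivity
      · filter_upwards [eventually_gt_atTop (0:ℝ)] with ρ hρ
        have hE1 : (0:ℝ) < Real.exp ρ + ρ := by have := key ρ hρ; linarith
        have hp0 : (0:ℝ) ≤ (ρ + 1) / (Real.exp ρ + ρ) := by positivity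
        have hp1 : (ρ + 1) / (Real.exp ρ + ρ) ≤ 1 := by
          rw [div_le_one hE1]; have := key ρ hρ; linarith
        exact aux_bound hρ hp0 hp1
    · apply tz
      · filter_upwards [eventually_gt_atTop (0:ℝ)] with ρ hρ
        have hD := aux_D_pos hρ
        have hE2 : (0:ℝ) < Real.exp ρ + ρ - 1 := by have := key ρ hρ; linarith
        positivity
      · filter_upwards [eventually_gt_atTop (0:ℝ)] with ρ hρ
        have hE2 : (0:ℝ) < Real.exp ρ + ρ - 1 := by have := key ρ hρ; linarith
        have hp0 : (0:ℝ) ≤ ρ / (Real.exp ρ + ρ - 1) := by positivity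
        have hp1 : ρ / (Real.exp ρ + ρ - 1) ≤ 1 := by
          rw [div_le_one hE2]; have := key ρ hρ; linarith
        exact aux_bound hρ hp0 hp1
end
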